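/- Let A = A₀ ⊕ A₁ with dim A₀ = 1, dim A₁ = 2, basis {e} of A₀ and {u,v} of A₁, with nonzero products u∘v = e and v∘u = −e. Then A is a Novikov superalgebra whose associated Lie superalgebra SLie(A) is abelian, A is also a Novikov algebra under the same product, and the Lie algebra Lie(A) (via the ordinary commutator) is not abelian, since [u,v] = 2e. -/
import Mathlib


/-- A Novikov superalgebra over ℂ: a ℤ₂-graded vector space `V = A 0 ⊕ A 1`
with a bilinear product respecting the grading, satisfying the graded
left-symmetry and graded right-commutativity identities. -/
structure NovikovSuperAlgebra (V : Type*) [AddCommGroup V] [Module ℂ V] where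
  mul : V →ₗ[ℂ] V →ₗ[ℂ] V
  grading : ZMod 2 → Submodule ℂ V
  spanning : ∀ x : V, ∃ x0 ∈ grading 0, ∃ x1 ∈ grading 1, x = x0 + x1
  indep : ∀ x : V, x ∈ grading 0 → x ∈ grading 1 → x = 0
  mul_mem : ∀ i j : ZMod 2, ∀ u ∈ grading i, ∀ v ∈ grading j, mul u v ∈ grading (i + j)
  super_left_sym : ∀ i j : ZMod 2, ∀ u ∈ grading i, ∀ v ∈ grading j, ∀ w : V,
    mul (mul u v) w - mul u (mul v w)
      = ((-1 : ℂ) ^ (i.val * j.val)) • (mul (mul v u) w - mul v (mul u w))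
  super_right_comm : ∀ i j : ZMod 2, ∀ u ∈ grading i, ∀ v ∈ grading j, ∀ w : V,
    mul (mul w u) v = ((-1 : ℂ) ^ (i.val * j.val)) • mul (mul w v) u

/-- The (ungraded) Novikov algebra identities for a bilinear product. -/
def IsNovikovMul {V : Type*} [AddCommGroup V] [Module ℂ V]
    (mul : V →ₗ[ℂ] V →ₗ[ℂ] V) : Prop :=
  (∀ x y z : V, mul (mul x y) z - mul x (mul y z) = mul (mul y x) z - mul y (mul x z)) ∧
  (∀ x y z : V, mul (mul z x) y = mul (mul z y) x)

/-- Supercommutator of elements of parities `i`, `j`. -/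
def sbr {V : Type*} [AddCommGroup V] [Module ℂ V]
    (mul : V →ₗ[ℂ] V →ₗ[ℂ] V) (i j : ZMod 2) (u v : V) : V :=
  mul u v - ((-1 : ℂ) ^ (i.val * j.val)) • mul v u

/-- The bilinear product on `ℂ × ℂ × ℂ` (with `e = (1,0,0)` even and
`u = (0,1,0)`, `v = (0,0,1)` odd) determined by `u∘v = e`, `v∘u = −e`,
all other basis products zero. -/
def mulEx5 : (ℂ × ℂ × ℂ) →ₗ[ℂ] (ℂ × ℂ × ℂ) →ₗ[ℂ] (ℂ × ℂ × ℂ) :=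
  LinearMap.mk₂ ℂ (fun x y => (x.2.1 * y.2.2 - x.2.2 * y.2.1, 0, 0))
    (by intro m₁ m₂ n; simp [Prod.ext_iff]; ring)
    (by intro c m n; simp [Prod.ext_iff]; ring)
    (by intro m n₁ n₂; simp [Prod.ext_iff]; ring)
    (by intro c m n; simp [Prod.ext_iff]; ring)

lemma mulEx5_apply (x y : ℂ × ℂ × ℂ) :
    mulEx5 x y = (x.2.1 * y.2.2 - x.2.2 * y.2.1, 0, 0) := rfl

lemma mulEx5_mul_left (x y z : ℂ × ℂ × ℂ) : mulEx5 (mulEx5 x y) z = 0 := by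
  simp [mulEx5_apply, Prod.ext_iff]

lemma mulEx5_mul_right (x y z : ℂ × ℂ × ℂ) : mulEx5 x (mulEx5 y z) = 0 := by
  simp [mulEx5_apply, Prod.ext_iff]

lemma mem0_iff (x : ℂ × ℂ × ℂ) :
    x ∈ Submodule.span ℂ {((1 : ℂ), (0 : ℂ), (0 : ℂ))} ↔ x.2.1 = 0 ∧ x.2.2 = 0 := by
  rw [Submodule.mem_span_singleton]
  constructor
  · rintro ⟨a, rfl⟩; simp [Prod.smul_def]
  · rintro ⟨h1, h2⟩
    exact ⟨x.1, by ext <;> simp [Prod.smul_def, h1, h2]⟩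

lemma mem1_iff (x : ℂ × ℂ × ℂ) :
    x ∈ Submodule.span ℂ {((0 : ℂ), (1 : ℂ), (0 : ℂ)), ((0 : ℂ), (0 : ℂ), (1 : ℂ))}
      ↔ x.1 = 0 := by
  rw [Submodule.mem_span_pair]
  constructor
  · rintro ⟨a, b, rfl⟩; simp [Prod.smul_def]
  · intro h
    exact ⟨x.2.1, x.2.2, by ext <;> simp [Prod.smul_def, h]⟩

/-- The grading used in the example. -/
noncomputable def gradEx5 : ZMod 2 → Submodule ℂ (ℂ × ℂ × ℂ) := fun i =>
  if i = 0 then Submodule.span ℂ {((1 : ℂ), (0 : ℂ), (0 : ℂ))}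
  else Submodule.span ℂ {((0 : ℂ), (1 : ℂ), (0 : ℂ)), ((0 : ℂ), (0 : ℂ), (1 : ℂ))}

/-- the 3-dimensional algebra with `A₀ = ℂe`, `A₁ = ℂu ⊕ ℂv` and
`u∘v = e`, `v∘u = −e` is a Novikov superalgebra whose super Lie bracket
vanishes on homogeneous elements (SLie(A) abelian); it is also a Novikov
algebra, but the ordinary commutator Lie algebra is not abelian: `[u,v] = 2e ≠ 0`. -/
theorem example_dim3_novikov_super :
    (∃ N : NovikovSuperAlgebra (ℂ × ℂ × ℂ),
      N.mul = mulEx5 ∧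
      N.grading 0 = Submodule.span ℂ {((1 : ℂ), (0 : ℂ), (0 : ℂ))} ∧
      N.grading 1 = Submodule.span ℂ {((0 : ℂ), (1 : ℂ), (0 : ℂ)),
        ((0 : ℂ), (0 : ℂ), (1 : ℂ))} ∧
      -- SLie(A) is abelian:
      ∀ i j : ZMod 2, ∀ x ∈ N.grading i, ∀ y ∈ N.grading j, sbr N.mul i j x y = 0) ∧
    IsNovikovMul mulEx5 ∧
    -- Lie(A) is not abelian: [u,v] = 2e ≠ 0
    (mulEx5 ((0 : ℂ), (1 : ℂ), (0 : ℂ)) ((0 : ℂ), (0 : ℂ), (1 : ℂ))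
        - mulEx5 ((0 : ℂ), (0 : ℂ), (1 : ℂ)) ((0 : ℂ), (1 : ℂ), (0 : ℂ))
      = (2 : ℂ) • ((1 : ℂ), (0 : ℂ), (0 : ℂ))) ∧
    (2 : ℂ) • (((1 : ℂ), (0 : ℂ), (0 : ℂ)) : ℂ × ℂ × ℂ) ≠ 0 := by
  have hg0 : gradEx5 0 = Submodule.span ℂ {((1 : ℂ), (0 : ℂ), (0 : ℂ))} := rfl
  have hg1 : gradEx5 1 = Submodule.span ℂ
      {((0 : ℂ), (1 : ℂ), (0 : ℂ)), ((0 : ℂ), (0 : ℂ), (1 : ℂ))} := rfl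
  refine ⟨⟨⟨mulEx5, gradEx5, ?_, ?_, ?_, ?_, ?_⟩, rfl, hg0, hg1, ?_⟩, ⟨?_, ?_⟩, ?_, ?_⟩
  · -- spanning
    intro x
    refine ⟨(x.1, 0, 0), ?_, (0, x.2.1, x.2.2), ?_, by ext <;> simp⟩
    · rw [hg0, mem0_iff]; exact ⟨rfl, rfl⟩
    · rw [hg1, mem1_iff]
  · -- indep
    intro x h0 h1
    rw [hg0, mem0_iff] at h0
    rw [hg1, mem1_iff] at h1
    ext <;> simp [h0.1, h0.2, h1]
  · -- mul_mem
    intro i j u hu v hv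
    have hcase : ∀ k : ZMod 2, k = 0 ∨ k = 1 := by decide
    rcases hcase i with rfl | rfl <;> rcases hcase j with rfl | rfl
    · rw [hg0, mem0_iff] at hu
      show mulEx5 u v ∈ gradEx5 0
      rw [hg0, mem0_iff, mulEx5_apply]
      exact ⟨rfl, rfl⟩
    · rw [hg0, mem0_iff] at hu
      show mulEx5 u v ∈ gradEx5 1
      rw [hg1, mem1_iff, mulEx5_apply]
      simp [hu.1, hu.2]
    · rw [hg0, mem0_iff] at hv
      show mulEx5 u v ∈ gradEx5 1
      rw [hg1, mem1_iff, mulEx5_apply]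
      simp [hv.1, hv.2]
    · show mulEx5 u v ∈ gradEx5 (1 + 1)
      have h2 : (1 + 1 : ZMod 2) = 0 := rfl
      rw [h2, hg0, mem0_iff, mulEx5_apply]
      exact ⟨rfl, rfl⟩
  · -- super_left_sym
    intro i j u _ v _ w
    simp [mulEx5_mul_left, mulEx5_mul_right]
  · -- super_right_comm
    intro i j u _ v _ w
    simp [mulEx5_mul_left]
  · -- sbr vanishes on homogeneous elements
    intro i j x hx y hy
    have hcase : ∀ k : ZMod 2, k = 0 ∨ k = 1 := by decide
    rcases hcase i with rfl | rfl <;> rcases hcase j with rfl | rfl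
    · obtain ⟨h1, h2⟩ := (mem0_iff x).mp hx
      simp [sbr, mulEx5_apply, h1, h2, Prod.ext_iff, Prod.smul_def]
    · obtain ⟨h1, h2⟩ := (mem0_iff x).mp hx
      simp [sbr, mulEx5_apply, h1, h2, Prod.ext_iff, Prod.smul_def]
    · obtain ⟨h1, h2⟩ := (mem0_iff y).mp hy
      simp [sbr, mulEx5_apply, h1, h2, Prod.ext_iff, Prod.smul_def]
    · simp [sbr, mulEx5_apply, Prod.ext_iff, Prod.smul_def, ZMod.val_one]
      ring
  · intro x y z
    simp [mulEx5_mul_left, mulEx5_mul_right]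
  · intro x y z
    simp [mulEx5_mul_left]
  · ext <;> simp [mulEx5_apply, Prod.smul_def] <;> norm_num
  · intro h
    have := congrArg Prod.fst h
    simp [Prod.smul_def] at this
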